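/- Let S be a unital epsilon-strongly G-graded ring such that ε_G := the product (meet) of all ε_g over g ∈ G is a nonzero element of the boolean semigroup B(E_G)*. Then ε_G S = ⊕_{g∈G} ε_G S_g is a strongly G-graded ring. -/

import Mathlib

/-! The shift rule `s ε_h = ε_{g+h} s` for `s ∈ S_g` lets every element of the semigroup
generated by the `ε_g` be pushed past a homogeneous element at the cost of shifting its indices.
Since `ε_G` absorbs every `ε_g` from both sides, it absorbs every such shifted product, and so
`ε_G s ε_G` equals both `ε_G s` and `s ε_G`: `ε_G` commutes with all homogeneous elements.
An idempotent `e` with this property and with `e ∈ e S_g S_{g⁻¹}` for every `g` cuts out a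
strongly graded corner. -/

open Pointwise

section Defs

variable {G : Type} [AddGroup G] [DecidableEq G]
variable {A : Type} [Ring A]
variable {M : Type} [AddCommGroup M] [Module A M]

/-- The additive subgroup of `M` consisting of finite sums of products `a • m`
with `a ∈ S` and `m ∈ N`. -/
def prodSMul (S : AddSubgroup A) (N : AddSubgroup M) : AddSubgroup M where
  __ := S.toAddSubmonoid • N.toAddSubmonoid
  neg_mem' {x} hx := by
    refine AddSubmonoid.smul_induction_on hx (fun a ha m hm => ?_) (fun x y hx hy => ?_)
    · rw [show -(a • m) = (-a) • m by rw [neg_smul]]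
      exact AddSubmonoid.smul_mem_smul (S.neg_mem ha) hm
    · rw [neg_add]
      exact (S.toAddSubmonoid • N.toAddSubmonoid).add_mem hx hy

/-- A (possibly non-unital) ring, here an additive subgroup of `A` closed under
multiplication, is *s-unital* if every element has a left and a right local unit in it. -/
def IsSUnitalSub (I : AddSubgroup A) : Prop :=
  ∀ a ∈ I, ∃ u ∈ I, ∃ v ∈ I, u * a = a ∧ a * v = a

variable (𝒜 : G → AddSubgroup A)

/-- `S` is symmetrically graded if `S_g S_{g⁻¹} S_g = S_g` for all `g`. -/
def IsSymmetricallyGraded : Prop := ∀ g : G, 𝒜 g * 𝒜 (-g) * 𝒜 g = 𝒜 g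

/-- `S` is nearly epsilon-strongly graded if each `S_g` is an s-unital
`(S_g S_{g⁻¹}, S_{g⁻¹} S_g)`-bimodule: for every `s ∈ S_g` there are
`u ∈ S_g S_{g⁻¹}` and `v ∈ S_{g⁻¹} S_g` with `u s = s = s v`. -/
def IsNearlyEpsilonStrong : Prop :=
  ∀ g : G, ∀ s ∈ 𝒜 g, ∃ u ∈ 𝒜 g * 𝒜 (-g), ∃ v ∈ 𝒜 (-g) * 𝒜 g, u * s = s ∧ s * v = s


section EpsilonCentral

variable {G : Type} [AddGroup G] [DecidableEq G]
variable {A : Type} [Ring A]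

/-- `r` is an epsilon-central element for the family `ε`: a minimal nonzero element of
the boolean semigroup generated by `{ε_g : g ∈ G}` that is central in `S`. -/
def IsEpsilonCentral (ε : G → A) (r : A) : Prop :=
  r ∈ Subsemigroup.closure (Set.range ε) ∧ r ≠ 0 ∧
    (∀ a ∈ Subsemigroup.closure (Set.range ε), a ≠ 0 → a * r = a → a = r) ∧
    ∀ x : A, r * x = x * r

/-- The image `e S_g` of a homogeneous component under left multiplication by `e`. -/
def cornerComponent (e : A) (S : AddSubgroup A) : AddSubgroup A :=
  S.map (AddMonoidHom.mulLeft e)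

end EpsilonCentral

namespace AddSubgroup

variable {R : Type*} [NonUnitalNonAssocRing R] {M N : AddSubgroup R}

theorem mul_mem_mul {m n : R} (hm : m ∈ M) (hn : n ∈ N) : m * n ∈ M * N :=
  AddSubmonoid.mul_mem_mul hm hn

@[elab_as_elim]
protected theorem mul_induction_on {C : R → Prop} {r : R} (hr : r ∈ M * N)
    (hm : ∀ m ∈ M, ∀ n ∈ N, C (m * n)) (ha : ∀ x y, C x → C y → C (x + y)) : C r :=
  AddSubmonoid.mul_induction_on hr hm ha

end AddSubgroup

namespace Subsemigroup

variable {M : Type*} [Semigroup M] {s : Set M} {e x : M}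

theorem mul_eq_left_of_mem_closure (h : ∀ a ∈ s, e * a = e) (hx : x ∈ closure s) :
    e * x = e := by
  induction hx using closure_induction with
  | mem a ha => exact h a ha
  | mul a b _ _ ha hb => rw [← mul_assoc, ha, hb]

theorem mul_eq_right_of_mem_closure (h : ∀ a ∈ s, a * e = e) (hx : x ∈ closure s) :
    x * e = e := by
  induction hx using closure_induction with
  | mem a ha => exact h a ha
  | mul a b _ _ ha hb => rw [mul_assoc, hb, ha]

end Subsemigroup

section StronglyGradedCorner

variable {G : Type*} [AddGroup G] {A : Type} [Ring A] {𝒜 : G → AddSubgroup A}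
  [SetLike.GradedMonoid 𝒜]

theorem mul_mem_cornerComponent (e : A) {S : AddSubgroup A} {a : A} (ha : a ∈ S) :
    e * a ∈ cornerComponent e S :=
  AddSubgroup.mem_map_of_mem _ ha

theorem cornerComponent_mul_le {e : A} (he : IsIdempotentElem e)
    (hcomm : ∀ k, ∀ s ∈ 𝒜 k, Commute e s) (g h : G) :
    cornerComponent e (𝒜 g) * cornerComponent e (𝒜 h) ≤ cornerComponent e (𝒜 (g + h)) := by
  intro x hx
  refine AddSubgroup.mul_induction_on hx ?_ fun _ _ => add_mem
  rintro _ ⟨a, ha, rfl⟩ _ ⟨b, hb, rfl⟩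
  have hab : e * a * (e * b) = e * (a * b) := by
    rw [← mul_assoc, mul_assoc e a e, ← (hcomm g a ha).eq, ← mul_assoc, he.eq, mul_assoc]
  simpa only [AddMonoidHom.coe_mulLeft, hab] using
    mul_mem_cornerComponent e (SetLike.mul_mem_graded ha hb)

theorem cornerComponent_le_mul {e : A} (he : IsIdempotentElem e)
    (hcomm : ∀ k, ∀ s ∈ 𝒜 k, Commute e s) (hfull : ∀ g, ∃ u ∈ 𝒜 g * 𝒜 (-g), e * u = e)
    (g h : G) :
    cornerComponent e (𝒜 (g + h)) ≤ cornerComponent e (𝒜 g) * cornerComponent e (𝒜 h) := by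
  rintro _ ⟨c, hc, rfl⟩
  obtain ⟨u, hu, heu⟩ := hfull g
  have key : ∀ x ∈ 𝒜 g * 𝒜 (-g), e * x * c ∈
      cornerComponent e (𝒜 g) * cornerComponent e (𝒜 h) := by
    intro x hx
    refine AddSubgroup.mul_induction_on hx (fun a ha b hb => ?_) fun x y hx hy => ?_
    · have hbc : b * c ∈ 𝒜 h := neg_add_cancel_left g h ▸ SetLike.mul_mem_graded hb hc
      have habc : e * (a * b) * c = e * a * (e * (b * c)) :=
        calc e * (a * b) * c = e * (e * a) * (b * c) := by
              rw [← mul_assoc e e, he.eq]; simp only [mul_assoc]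
          _ = e * (a * e) * (b * c) := by rw [(hcomm g a ha).eq]
          _ = e * a * (e * (b * c)) := by simp only [mul_assoc]
      rw [habc]
      exact AddSubgroup.mul_mem_mul (mul_mem_cornerComponent e ha)
        (mul_mem_cornerComponent e hbc)
    · rw [mul_add, add_mul]
      exact add_mem hx hy
  simpa only [AddMonoidHom.coe_mulLeft, heu] using key u hu

theorem cornerComponent_mul_cornerComponent {e : A} (he : IsIdempotentElem e)
    (hcomm : ∀ k, ∀ s ∈ 𝒜 k, Commute e s) (hfull : ∀ g, ∃ u ∈ 𝒜 g * 𝒜 (-g), e * u = e)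
    (g h : G) :
    cornerComponent e (𝒜 g) * cornerComponent e (𝒜 h) = cornerComponent e (𝒜 (g + h)) :=
  (cornerComponent_mul_le he hcomm g h).antisymm (cornerComponent_le_mul he hcomm hfull g h)

end StronglyGradedCorner

section EpsilonFamily

variable {G : Type*} [AddGroup G] {A : Type} [Ring A] {𝒜 : G → AddSubgroup A}
  [SetLike.GradedMonoid 𝒜] {ε : G → A}

theorem eps_mem_zero (hmem : ∀ g, ε g ∈ 𝒜 g * 𝒜 (-g)) (g : G) : ε g ∈ 𝒜 0 :=
  AddSubgroup.mul_induction_on (hmem g)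
    (fun _ ha _ hb => add_neg_cancel g ▸ SetLike.mul_mem_graded ha hb) fun _ _ => add_mem

theorem mem_zero_of_mem_closure (hmem : ∀ g, ε g ∈ 𝒜 g * 𝒜 (-g)) {x : A}
    (hx : x ∈ Subsemigroup.closure (Set.range ε)) : x ∈ 𝒜 0 := by
  induction hx using Subsemigroup.closure_induction with
  | mem _ hx => obtain ⟨g, rfl⟩ := hx; exact eps_mem_zero hmem g
  | mul _ _ _ _ hx hy => exact add_zero (0 : G) ▸ SetLike.mul_mem_graded hx hy

theorem mul_eps_eq_eps_add_mul (hmem : ∀ g, ε g ∈ 𝒜 g * 𝒜 (-g))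
    (hunit : ∀ g, ∀ s ∈ 𝒜 g, ε g * s = s ∧ s * ε (-g) = s) {g : G} {s : A} (hs : s ∈ 𝒜 g)
    (h : G) : s * ε h = ε (g + h) * s := by
  have hleft : ε (g + h) * (s * ε h) = s * ε h := by
    refine AddSubgroup.mul_induction_on (C := fun x => ε (g + h) * (s * x) = s * x) (hmem h)
      (fun a ha b _ => ?_) fun x y hx hy => ?_
    · rw [← mul_assoc s, ← mul_assoc, (hunit _ _ (SetLike.mul_mem_graded hs ha)).1]
    · rw [mul_add, mul_add, hx, hy]
  have hright : ε (g + h) * s * ε h = ε (g + h) * s := by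
    refine AddSubgroup.mul_induction_on (C := fun x => x * s * ε h = x * s) (hmem (g + h))
      (fun a _ b hb => ?_) fun x y hx hy => ?_
    · have hbs : b * s ∈ 𝒜 (-h) := by
        simpa only [neg_add_rev, neg_add_cancel_right] using SetLike.mul_mem_graded hb hs
      have hbs_unit := (hunit (-h) _ hbs).2
      rw [neg_neg] at hbs_unit
      rw [mul_assoc a b, mul_assoc, hbs_unit]
    · rw [add_mul, add_mul, hx, hy]
  rw [← hright, mul_assoc, hleft]

theorem exists_mul_eq_mul_of_mem_closure (hmem : ∀ g, ε g ∈ 𝒜 g * 𝒜 (-g))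
    (hunit : ∀ g, ∀ s ∈ 𝒜 g, ε g * s = s ∧ s * ε (-g) = s) {x : A}
    (hx : x ∈ Subsemigroup.closure (Set.range ε)) {g : G} {s : A} (hs : s ∈ 𝒜 g) :
    ∃ y ∈ Subsemigroup.closure (Set.range ε), s * x = y * s := by
  induction hx using Subsemigroup.closure_induction with
  | mem _ hx =>
    obtain ⟨h, rfl⟩ := hx
    exact ⟨ε (g + h), Subsemigroup.subset_closure ⟨_, rfl⟩, mul_eps_eq_eps_add_mul hmem hunit hs h⟩
  | mul _ _ _ _ hx₁ hx₂ =>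
    obtain ⟨y₁, hy₁, hsy₁⟩ := hx₁
    obtain ⟨y₂, hy₂, hsy₂⟩ := hx₂
    exact ⟨y₁ * y₂, mul_mem hy₁ hy₂, by rw [← mul_assoc, hsy₁, mul_assoc, hsy₂, ← mul_assoc]⟩

theorem exists_mul_eq_mul_of_mem_closure' (hmem : ∀ g, ε g ∈ 𝒜 g * 𝒜 (-g))
    (hunit : ∀ g, ∀ s ∈ 𝒜 g, ε g * s = s ∧ s * ε (-g) = s) {x : A}
    (hx : x ∈ Subsemigroup.closure (Set.range ε)) {g : G} {s : A} (hs : s ∈ 𝒜 g) :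
    ∃ y ∈ Subsemigroup.closure (Set.range ε), x * s = s * y := by
  induction hx using Subsemigroup.closure_induction with
  | mem _ hx =>
    obtain ⟨h, rfl⟩ := hx
    refine ⟨ε (-g + h), Subsemigroup.subset_closure ⟨_, rfl⟩, ?_⟩
    rw [mul_eps_eq_eps_add_mul hmem hunit hs, add_neg_cancel_left]
  | mul _ _ _ _ hx₁ hx₂ =>
    obtain ⟨y₁, hy₁, hsy₁⟩ := hx₁
    obtain ⟨y₂, hy₂, hsy₂⟩ := hx₂
    exact ⟨y₁ * y₂, mul_mem hy₁ hy₂, by rw [mul_assoc, hsy₂, ← mul_assoc, hsy₁, mul_assoc]⟩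

theorem commute_of_mem_closure_of_mul_eps_eq (hmem : ∀ g, ε g ∈ 𝒜 g * 𝒜 (-g))
    (hunit : ∀ g, ∀ s ∈ 𝒜 g, ε g * s = s ∧ s * ε (-g) = s) {e : A}
    (he : e ∈ Subsemigroup.closure (Set.range ε)) (hlower : ∀ g, e * ε g = e) {k : G} {s : A}
    (hs : s ∈ 𝒜 k) : Commute e s := by
  have hleft : ∀ y ∈ Subsemigroup.closure (Set.range ε), e * y = e := fun _ hy =>
    Subsemigroup.mul_eq_left_of_mem_closure (Set.forall_mem_range.2 hlower) hy
  have hright : ∀ y ∈ Subsemigroup.closure (Set.range ε), y * e = e := by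
    refine fun _ hy => Subsemigroup.mul_eq_right_of_mem_closure (Set.forall_mem_range.2 fun g => ?_) hy
    simpa only [zero_add, hlower] using
      (mul_eps_eq_eps_add_mul hmem hunit (mem_zero_of_mem_closure hmem he) g).symm
  obtain ⟨y, hy, hsy⟩ := exists_mul_eq_mul_of_mem_closure hmem hunit he hs
  obtain ⟨z, hz, hzs⟩ := exists_mul_eq_mul_of_mem_closure' hmem hunit he hs
  calc e * s = e * s * e := by rw [mul_assoc, hsy, ← mul_assoc, hleft y hy]
    _ = s * e := by rw [hzs, mul_assoc, hright z hz]

end EpsilonFamily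

theorem corner_strongly_graded_of_meet_general
    {G : Type} [AddGroup G] [DecidableEq G]
    {A : Type} [Ring A] (𝒜 : G → AddSubgroup A) [GradedRing 𝒜]
    (ε : G → A)
    (hmem : ∀ g : G, ε g ∈ 𝒜 g * 𝒜 (-g))
    (hunit : ∀ g : G, ∀ s ∈ 𝒜 g, ε g * s = s ∧ s * ε (-g) = s)
    (εG : A)
    (hB : εG ∈ Subsemigroup.closure (Set.range ε))
    (hlower : ∀ g : G, εG * ε g = εG) :
    ∀ g h : G,
      cornerComponent εG (𝒜 g) * cornerComponent εG (𝒜 h)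
        = cornerComponent εG (𝒜 (g + h)) :=
  cornerComponent_mul_cornerComponent
    (Subsemigroup.mul_eq_left_of_mem_closure (Set.forall_mem_range.2 hlower) hB)
    (fun _ _ hs => commute_of_mem_closure_of_mul_eps_eq hmem hunit hB hlower hs)
    (fun g => ⟨ε g, hmem g, hlower g⟩)

/-- If `ε_G = ⋀_g ε_g` is a nonzero element of the boolean
semigroup `B(E_G)*`, then `ε_G S = ⊕_g ε_G S_g` is strongly `G`-graded. -/
theorem corner_strongly_graded_of_meet
    {G : Type} [AddGroup G] [DecidableEq G]
    {A : Type} [Ring A] (𝒜 : G → AddSubgroup A) [GradedRing 𝒜]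
    (ε : G → A)
    (hmem : ∀ g : G, ε g ∈ 𝒜 g * 𝒜 (-g))
    (hunit : ∀ g : G, ∀ s ∈ 𝒜 g, ε g * s = s ∧ s * ε (-g) = s)
    (εG : A)
    (hB : εG ∈ Subsemigroup.closure (Set.range ε))
    (h0 : εG ≠ 0)
    (hlower : ∀ g : G, εG * ε g = εG)
    (hinf : ∀ b ∈ Subsemigroup.closure (Set.range ε),
      (∀ g : G, b * ε g = b) → b * εG = b) :
    ∀ g h : G,
      cornerComponent εG (𝒜 g) * cornerComponent εG (𝒜 h)
        = cornerComponent εG (𝒜 (g + h)) :=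
  corner_strongly_graded_of_meet_general 𝒜 ε hmem hunit εG hB hlower
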